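/- Let σ be a permutation of {0,…,n} and consider the Markov chain Y^σ that from state k jumps to σ(k)+1 or σ(k)−1 each with probability 1/2 (with the convention that from states where σ(k) = 0 or σ(k) = n the chain stays or reflects so that it moves within {0,…,n}, i.e., the walk is a simple random walk on a strongly connected 2-regular directed multigraph on {0,…,n}). Then the expected hitting time of n starting from 0 satisfies E_0[τ_n] ≤ n² + n. -/

import Mathlib

open scoped ENNReal Classical

/-- Finite-horizon iterates whose supremum is the expected hitting time of `S`
for the Markov chain with transition kernel `P`. -/
noncomputable def hitIter {V : Type*} (P : V → V → ℝ≥0∞) (S : Set V) : ℕ → V → ℝ≥0∞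
  | 0 => fun _ => 0
  | (m + 1) => fun x => if x ∈ S then 0 else 1 + ∑' z, P x z * hitIter P S m z

/-- Expected hitting time `E_x[τ_S]` of the set `S`, started from `x`, defined as the
minimal nonnegative solution of the hitting-time equations (supremum of iterates). -/
noncomputable def hitExp {V : Type*} (P : V → V → ℝ≥0∞) (S : Set V) (x : V) : ℝ≥0∞ :=
  ⨆ m, hitIter P S m x

/-- Outdegree of `x` in a directed multigraph given by edge multiplicities `E`. -/
def outdeg {V : Type*} [Fintype V] (E : V → V → ℕ) (x : V) : ℕ := ∑ y, E x y

/-- Indegree of `x`. -/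
def indeg {V : Type*} [Fintype V] (E : V → V → ℕ) (x : V) : ℕ := ∑ y, E y x

/-- Transition kernel of the simple random walk on the multigraph `E`. -/
noncomputable def stepP {V : Type*} [Fintype V] (E : V → V → ℕ) (x y : V) : ℝ≥0∞ :=
  (E x y : ℝ≥0∞) / (outdeg E x : ℝ≥0∞)

/-- Expected return time `E_i[τ_i⁺]` of the simple random walk on `E`. -/
noncomputable def retExp {V : Type*} [Fintype V] (E : V → V → ℕ) (i : V) : ℝ≥0∞ :=
  1 + ∑' z, stepP E i z * hitExp (stepP E) {i} z


/-- Transition kernel of the variant permuted walk `Y^σ` on `{0,…,n}`: from `k` it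
jumps to `σ(k)+1` or `σ(k)−1` equally likely, staying put at the corresponding
boundary when `σ(k) = n` or `σ(k) = 0`. -/
noncomputable def permP' {n : ℕ} (σ : Equiv.Perm (Fin (n + 1))) (k l : Fin (n + 1)) :
    ℝ≥0∞ :=
  (if l = (⟨(σ k).val - 1, lt_of_le_of_lt (Nat.sub_le _ _) (σ k).isLt⟩ : Fin (n + 1))
      then 1 / 2 else 0)
  + (if l = (⟨min ((σ k).val + 1) n, Nat.lt_succ_of_le (min_le_right _ _)⟩ : Fin (n + 1))
      then 1 / 2 else 0)


namespace VPW

variable {n : ℕ}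

def dp (j : Fin (n+1)) : Fin (n+1) := ⟨j.val - 1, lt_of_le_of_lt (Nat.sub_le _ _) j.isLt⟩
def ds (j : Fin (n+1)) : Fin (n+1) := ⟨min (j.val + 1) n, Nat.lt_succ_of_le (min_le_right _ _)⟩

noncomputable def q (σ : Equiv.Perm (Fin (n+1))) (x z : Fin (n+1)) : ℝ :=
  (if z = dp (σ x) then 1/2 else 0) + (if z = ds (σ x) then 1/2 else 0)

def e1 (z : Fin (n+1)) : Fin (n+1) :=
  ⟨if z.val = 0 then 0 else if z.val = n then n-1 else z.val+1, by
    have := z.isLt; split_ifs <;> omega⟩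
def e2 (z : Fin (n+1)) : Fin (n+1) :=
  ⟨if z.val = 0 then min 1 n else if z.val = n then n else z.val-1, by
    have := z.isLt; split_ifs <;> omega⟩

variable (σ : Equiv.Perm (Fin (n+1)))

lemma permP'_eq (x z : Fin (n+1)) : permP' σ x z =
    (if z = dp (σ x) then (1/2 : ℝ≥0∞) else 0) + (if z = ds (σ x) then 1/2 else 0) := rfl

lemma permP'_toReal (x z : Fin (n+1)) : (permP' σ x z).toReal = q σ x z := by
  rw [permP'_eq, q]
  rw [ENNReal.toReal_add (by split_ifs <;> simp) (by split_ifs <;> simp)]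
  congr 1 <;> split_ifs <;> norm_num

lemma q_nonneg (x z : Fin (n+1)) : 0 ≤ q σ x z := by
  rw [q]; split_ifs <;> norm_num

lemma q_dp (x : Fin (n+1)) : 1/2 ≤ q σ x (dp (σ x)) := by
  rw [q, if_pos rfl]; split_ifs <;> norm_num

lemma q_ds (x : Fin (n+1)) : 1/2 ≤ q σ x (ds (σ x)) := by
  rw [q]; rw [if_pos rfl]; split_ifs <;> norm_num

lemma qrow (x : Fin (n+1)) : ∑ z, q σ x z = 1 := by
  rw [show (fun z => q σ x z) = fun z => ((if z = dp (σ x) then (1/2:ℝ) else 0) + (if z = ds (σ x) then 1/2 else 0)) from rfl]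
  rw [Finset.sum_add_distrib]
  simp; norm_num

lemma Prow (x : Fin (n+1)) : ∑ z, permP' σ x z = 1 := by
  simp only [permP'_eq]
  rw [Finset.sum_add_distrib]
  simp
  rw [ENNReal.inv_two_add_inv_two]

lemma qcol (z : Fin (n+1)) : ∑ x, q σ x z = 1 := by
  have h1 : ∑ x, q σ x z
      = ∑ j, ((if z = dp j then (1/2:ℝ) else 0) + (if z = ds j then 1/2 else 0)) :=
    Equiv.sum_comp σ (fun j => (if z = dp j then (1/2:ℝ) else 0) + (if z = ds j then 1/2 else 0))
  rw [h1]
  rcases Nat.eq_zero_or_pos n with hn | hn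
  · subst hn
    rw [Fin.sum_univ_one]
    have hz : z = ⟨0, by omega⟩ := Fin.ext (by omega)
    subst hz
    rw [if_pos (Fin.ext (by simp [dp])), if_pos (Fin.ext (by simp [ds]))]
    norm_num
  · have key : ∀ j : Fin (n+1),
        ((if z = dp j then (1/2:ℝ) else 0) + (if z = ds j then 1/2 else 0))
        = (if j = e1 z then 1/2 else 0) + (if j = e2 z then 1/2 else 0) := by
      intro j
      have hj := j.isLt
      have hz := z.isLt
      simp only [dp, ds, Fin.ext_iff, e1, e2, Nat.min_def]
      split_ifs <;> (try (exfalso; omega)) <;> norm_num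
    rw [Finset.sum_congr rfl (fun j _ => key j), Finset.sum_add_distrib]
    simp
    norm_num

/-- No proper "forward-closed" set avoids `Fin.last n`. -/
lemma cut (A : Finset (Fin (n+1))) (hA : A.Nonempty) (hlast : Fin.last n ∉ A)
    (hcl : ∀ x ∈ A, dp (σ x) ∈ A ∧ ds (σ x) ∈ A) : False := by
  set T : Finset (Fin (n+1)) := A.image σ with hT
  have hTcard : T.card = A.card := Finset.card_image_of_injective _ σ.injective
  have hTlt : ∀ j ∈ T, (j : ℕ) < n := by
    intro j hj
    rcases Finset.mem_image.mp hj with ⟨x, hx, rfl⟩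
    by_contra hge
    have hjn : ((σ x : Fin (n+1)) : ℕ) = n := by have := (σ x).isLt; omega
    have : ds (σ x) = Fin.last n := by
      simp [ds, Fin.ext_iff, hjn]
    exact hlast (this ▸ (hcl x hx).2)
  have hds_mem : ∀ j ∈ T, ds j ∈ A := by
    intro j hj
    rcases Finset.mem_image.mp hj with ⟨x, hx, rfl⟩
    exact (hcl x hx).2
  have hdp_mem : ∀ j ∈ T, dp j ∈ A := by
    intro j hj
    rcases Finset.mem_image.mp hj with ⟨x, hx, rfl⟩
    exact (hcl x hx).1
  have hds_val : ∀ j ∈ T, (ds j : ℕ) = (j : ℕ) + 1 := by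
    intro j hj
    have := hTlt j hj
    simp [ds]; omega
  have hinj : Set.InjOn ds (T : Set (Fin (n+1))) := by
    intro a ha b hb hab
    have : (a : ℕ) + 1 = (b : ℕ) + 1 := by
      rw [← hds_val a ha, ← hds_val b hb, hab]
    exact Fin.ext (by omega)
  have hsub : T.image ds ⊆ A := by
    intro y hy
    rcases Finset.mem_image.mp hy with ⟨j, hj, rfl⟩
    exact hds_mem j hj
  have hcard2 : (T.image ds).card = A.card := by
    rw [Finset.card_image_of_injOn hinj, hTcard]
  have hAeq : T.image ds = A :=
    Finset.eq_of_subset_of_card_le hsub (by omega)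
  have hpos : ∀ y ∈ A, 1 ≤ (y : ℕ) := by
    intro y hy
    rw [← hAeq] at hy
    rcases Finset.mem_image.mp hy with ⟨j, hj, rfl⟩
    rw [hds_val j hj]; omega
  obtain ⟨r, hrA, hrmin⟩ := A.exists_min_image (fun y => (y : ℕ)) hA
  have hr1 : 1 ≤ (r : ℕ) := hpos r hrA
  have : r ∈ T.image ds := hAeq.symm ▸ hrA
  rcases Finset.mem_image.mp this with ⟨j, hj, hrj⟩
  have hrv : (r : ℕ) = (j : ℕ) + 1 := by rw [← hrj, hds_val j hj]
  have hdpj : dp j ∈ A := hdp_mem j hj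
  have : (r : ℕ) ≤ (dp j : ℕ) := hrmin _ hdpj
  have hdpv : (dp j : ℕ) = (j : ℕ) - 1 := rfl
  rcases Nat.eq_zero_or_pos (j : ℕ) with h0 | h0
  · exact absurd (hpos _ hdpj) (by omega)
  · omega

lemma hitIter_mono {V : Type*} (P : V → V → ℝ≥0∞) (S : Set V) :
    ∀ m x, hitIter P S m x ≤ hitIter P S (m+1) x := by
  intro m
  induction m with
  | zero => intro x; exact zero_le
  | succ m ih =>
    intro x
    show hitIter P S (m+1) x ≤ hitIter P S (m+2) x
    simp only [hitIter]
    split_ifs with h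
    · exact le_refl _
    · exact add_le_add_right (ENNReal.tsum_le_tsum fun z => mul_le_mul_right (ih z) _) _

lemma hitIter_le {V : Type*} [Fintype V] (P : V → V → ℝ≥0∞) (S : Set V)
    (hrow : ∀ x, ∑ z, P x z = 1) :
    ∀ m x, hitIter P S m x ≤ (m : ℝ≥0∞) := by
  intro m
  induction m with
  | zero => intro x; exact zero_le
  | succ m ih =>
    intro x
    show hitIter P S (m+1) x ≤ _
    simp only [hitIter]
    split_ifs with h
    · exact zero_le
    · calc 1 + ∑' z, P x z * hitIter P S m z
          ≤ 1 + ∑' z, P x z * (m : ℝ≥0∞) :=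
            add_le_add_right (ENNReal.tsum_le_tsum fun z => mul_le_mul_right (ih z) _) _
        _ = 1 + (m : ℝ≥0∞) := by
            rw [tsum_fintype, ← Finset.sum_mul, hrow x, one_mul]
        _ = ((m+1 : ℕ) : ℝ≥0∞) := by push_cast; ring

lemma hitIter_ne_top {V : Type*} [Fintype V] (P : V → V → ℝ≥0∞) (S : Set V)
    (hrow : ∀ x, ∑ z, P x z = 1) (m : ℕ) (x : V) : hitIter P S m x ≠ ∞ :=
  ne_top_of_le_ne_top (by simp) (hitIter_le P S hrow m x)

/-- real-valued iterate -/
noncomputable def v (σ : Equiv.Perm (Fin (n+1))) (m : ℕ) (x : Fin (n+1)) : ℝ :=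
  (hitIter (permP' σ) {Fin.last n} m x).toReal

lemma v_nonneg (m : ℕ) (x : Fin (n+1)) : 0 ≤ v σ m x := ENNReal.toReal_nonneg

lemma v_last (m : ℕ) : v σ m (Fin.last n) = 0 := by
  cases m with
  | zero => simp [v, hitIter]
  | succ m => simp [v, hitIter]

lemma v_subsol (m : ℕ) (x : Fin (n+1)) (hx : x ≠ Fin.last n) :
    v σ m x ≤ 1 + ∑ z, q σ x z * v σ m z := by
  have hrow := Prow σ
  have hPne : ∀ z, permP' σ x z ≠ ∞ := by
    intro z; rw [permP'_eq]; split_ifs <;> simp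
  have hne : ∀ z, permP' σ x z * hitIter (permP' σ) {Fin.last n} m z ≠ ∞ :=
    fun z => ENNReal.mul_ne_top (hPne z) (hitIter_ne_top _ _ hrow m z)
  have hstep : hitIter (permP' σ) {Fin.last n} m x
      ≤ 1 + ∑' z, permP' σ x z * hitIter (permP' σ) {Fin.last n} m z := by
    have := hitIter_mono (permP' σ) {Fin.last n} m x
    rwa [show hitIter (permP' σ) {Fin.last n} (m+1) x
        = 1 + ∑' z, permP' σ x z * hitIter (permP' σ) {Fin.last n} m z from by
      simp only [hitIter]; rw [if_neg (by simpa using hx)]] at this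
  have hfin : (1 : ℝ≥0∞) + ∑' z, permP' σ x z * hitIter (permP' σ) {Fin.last n} m z ≠ ∞ := by
    rw [show (1 : ℝ≥0∞) + ∑' z, permP' σ x z * hitIter (permP' σ) {Fin.last n} m z
        = hitIter (permP' σ) {Fin.last n} (m+1) x from by
      simp only [hitIter]; rw [if_neg (by simpa using hx)]]
    exact hitIter_ne_top _ _ hrow (m+1) x
  have h2 := ENNReal.toReal_mono hfin hstep
  rw [ENNReal.toReal_add ENNReal.one_ne_top (by
        intro h; rw [h] at hfin; simp at hfin)] at h2
  rw [tsum_fintype] at h2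
  rw [ENNReal.toReal_sum (fun z _ => hne z)] at h2
  simp only [ENNReal.toReal_mul, ENNReal.toReal_one] at h2
  simp only [permP'_toReal σ] at h2
  exact h2

lemma v_bound (m : ℕ) : ∀ k, k ≤ n → ∃ B : Finset (Fin (n+1)), Fin.last n ∈ B ∧
    B.card = k + 1 ∧ ∀ x ∈ B, v σ m x ≤ (k : ℝ) * (2*(n+1) - k - 1) := by
  intro k
  induction k with
  | zero =>
    intro _
    refine ⟨{Fin.last n}, Finset.mem_singleton_self _, Finset.card_singleton _, ?_⟩
    intro x hx
    rw [Finset.mem_singleton] at hx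
    subst hx
    rw [v_last]
    norm_num
  | succ k ih =>
    intro hk1
    obtain ⟨B, hlastB, hcard, hbd⟩ := ih (by omega)
    set ck : ℝ := (k : ℝ) * (2*(n+1) - k - 1) with hck
    set A : Finset (Fin (n+1)) := Bᶜ with hA
    have hcardA : A.card = n - k := by
      rw [hA, Finset.card_compl, hcard]
      simp
    have hAne : A.Nonempty := by
      rw [← Finset.card_pos, hcardA]; omega
    have hlastA : Fin.last n ∉ A := by
      rw [hA]; simp [hlastB]
    -- minimizer over A
    obtain ⟨x₀, hx₀A, hx₀min⟩ := A.exists_min_image (v σ m) hAne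
    -- column partial sums
    set c : Fin (n+1) → ℝ := fun z => ∑ x ∈ A, q σ x z with hc
    have hc_nonneg : ∀ z, 0 ≤ c z := fun z => Finset.sum_nonneg fun x _ => q_nonneg σ x z
    have hc_le_one : ∀ z, c z ≤ 1 := by
      intro z
      rw [hc]
      calc ∑ x ∈ A, q σ x z ≤ ∑ x, q σ x z :=
            Finset.sum_le_sum_of_subset_of_nonneg (Finset.subset_univ A)
              (fun x _ _ => q_nonneg σ x z)
        _ = 1 := qcol σ z
    have hsum_c : ∑ z, c z = (A.card : ℝ) := by
      rw [hc]
      rw [Finset.sum_comm]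
      rw [Finset.sum_congr rfl (fun x _ => qrow σ x)]
      simp
    -- the two pieces
    set sA : ℝ := ∑ z ∈ A, c z with hsA
    set sB : ℝ := ∑ z ∈ Aᶜ, c z with hsB
    have hsplit : sA + sB = (A.card : ℝ) := by
      rw [hsA, hsB, Finset.sum_add_sum_compl A c, hsum_c]
    -- main inequality from subsolution
    have main : ∑ z ∈ A, (1 - c z) * v σ m z ≤ (A.card : ℝ) + sB * ck := by
      have h1 : ∑ x ∈ A, v σ m x ≤ ∑ x ∈ A, (1 + ∑ z, q σ x z * v σ m z) := by
        refine Finset.sum_le_sum fun x hxA => ?_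
        refine v_subsol σ m x ?_
        intro h; exact hlastA (h ▸ hxA)
      rw [Finset.sum_add_distrib, Finset.sum_const, nsmul_eq_mul, mul_one] at h1
      have hswap : ∑ x ∈ A, ∑ z, q σ x z * v σ m z = ∑ z, c z * v σ m z := by
        rw [Finset.sum_comm]
        refine Finset.sum_congr rfl fun z _ => ?_
        rw [hc, Finset.sum_mul]
      rw [hswap] at h1
      rw [← Finset.sum_add_sum_compl A (fun z => c z * v σ m z)] at h1
      have hBpart : ∑ z ∈ Aᶜ, c z * v σ m z ≤ sB * ck := by
        rw [hsB, Finset.sum_mul]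
        refine Finset.sum_le_sum fun z hz => ?_
        have hzB : z ∈ B := by
          rw [hA] at hz; simpa using hz
        exact mul_le_mul_of_nonneg_left (hbd z hzB) (hc_nonneg z)
      have expand : ∑ z ∈ A, (1 - c z) * v σ m z
          = ∑ z ∈ A, v σ m z - ∑ z ∈ A, c z * v σ m z := by
        rw [← Finset.sum_sub_distrib]
        refine Finset.sum_congr rfl fun z _ => by ring
      rw [expand]
      linarith
    -- lower bound for LHS
    have lower : sB * v σ m x₀ ≤ ∑ z ∈ A, (1 - c z) * v σ m z := by
      have : ∀ z ∈ A, (1 - c z) * v σ m x₀ ≤ (1 - c z) * v σ m z := by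
        intro z hz
        exact mul_le_mul_of_nonneg_left (hx₀min z hz) (by linarith [hc_le_one z])
      calc sB * v σ m x₀ = (∑ z ∈ A, (1 - c z)) * v σ m x₀ := by
            rw [Finset.sum_sub_distrib, Finset.sum_const, nsmul_eq_mul, mul_one]
            have : sB = (A.card : ℝ) - sA := by linarith
            rw [this, hsA]
        _ = ∑ z ∈ A, (1 - c z) * v σ m x₀ := by rw [Finset.sum_mul]
        _ ≤ _ := Finset.sum_le_sum this
    -- sB ≥ 1/2 via cut lemma
    have hsB2 : 1/2 ≤ sB := by
      have hnc : ¬ (∀ x ∈ A, dp (σ x) ∈ A ∧ ds (σ x) ∈ A) := by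
        intro hcl; exact cut σ A hAne hlastA hcl
      push_neg at hnc
      obtain ⟨x₁, hx₁A, hx₁⟩ := hnc
      have hz₁ : ∃ z₁, z₁ ∈ Aᶜ ∧ 1/2 ≤ q σ x₁ z₁ := by
        by_cases hdp : dp (σ x₁) ∈ A
        · exact ⟨ds (σ x₁), by simpa using (hx₁ hdp), q_ds σ x₁⟩
        · exact ⟨dp (σ x₁), by simpa using hdp, q_dp σ x₁⟩
      obtain ⟨z₁, hz₁mem, hz₁q⟩ := hz₁
      have h1 : q σ x₁ z₁ ≤ c z₁ :=
        Finset.single_le_sum (fun x _ => q_nonneg σ x z₁) hx₁A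
      have h2 : c z₁ ≤ sB :=
        Finset.single_le_sum (fun z _ => hc_nonneg z) hz₁mem
      linarith
    -- conclude the bound for x₀
    have hx₀bd : v σ m x₀ ≤ ck + 2 * ((n : ℝ) - k) := by
      have hAcast : (A.card : ℝ) = (n : ℝ) - k := by
        rw [hcardA]
        push_cast [Nat.cast_sub (by omega : k ≤ n)]
        ring
      by_cases hcase : v σ m x₀ ≤ ck
      · have : (0:ℝ) ≤ (n : ℝ) - k := by
          have : (k:ℝ) ≤ n := by exact_mod_cast (by omega : k ≤ n)
          linarith
        linarith
      · push_neg at hcase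
        have key : sB * (v σ m x₀ - ck) ≤ (n : ℝ) - k := by
          have := le_trans lower main
          rw [hAcast] at this
          nlinarith
        nlinarith
    -- build the new set
    have hx₀B : x₀ ∉ B := by
      rw [hA] at hx₀A; simpa using hx₀A
    refine ⟨insert x₀ B, Finset.mem_insert_of_mem hlastB, ?_, ?_⟩
    · rw [Finset.card_insert_of_notMem hx₀B, hcard]
    · intro x hx
      have hgoal : ck + 2 * ((n:ℝ) - k) = ((k+1 : ℕ) : ℝ) * (2*(n+1) - ((k+1 : ℕ) : ℝ) - 1) := by
        rw [hck]; push_cast; ring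
      rcases Finset.mem_insert.mp hx with rfl | hxB
      · rw [← hgoal]; exact hx₀bd
      · refine le_trans (hbd x hxB) ?_
        rw [← hgoal, hck]
        have : (0:ℝ) ≤ (n : ℝ) - k := by
          have : (k:ℝ) ≤ n := by exact_mod_cast (by omega : k ≤ n)
          linarith
        linarith

end VPW

/-- For the variant permuted walk the expected hitting time of `n` from `0` is at most
`n² + n`. -/
theorem variant_permuted_walk_hitting_time {n : ℕ} (σ : Equiv.Perm (Fin (n + 1))) :
    hitExp (permP' σ) {Fin.last n} 0 ≤ ((n ^ 2 + n : ℕ) : ℝ≥0∞) := by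
  rw [hitExp]
  refine iSup_le fun m => ?_
  obtain ⟨B, hlastB, hcard, hbd⟩ := VPW.v_bound σ m n le_rfl
  have hBuniv : B = Finset.univ := Finset.eq_univ_of_card B (by rw [hcard]; simp)
  have h0 : (0 : Fin (n+1)) ∈ B := hBuniv ▸ Finset.mem_univ _
  have hv := hbd 0 h0
  have harith : (n : ℝ) * (2*(n+1) - n - 1) = ((n^2 + n : ℕ) : ℝ) := by push_cast; ring
  rw [harith] at hv
  have hne := VPW.hitIter_ne_top (permP' σ) {Fin.last n} (VPW.Prow σ) m 0
  rw [← ENNReal.toReal_le_toReal hne (by simp)]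
  rwa [ENNReal.toReal_natCast]
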